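/- arXiv:2212.00123 — 2 statements merged into one kernel-verified Lean document; each statement's English description precedes it below -/
import Mathlib

section
/- Let k ≥ 2, let W be a cyclic word, and let u be a reduced word of length k−1. Then Σ_{t̄ ∈ W_k} occ(t, W) · occf(u, t) = 2 · occ(u, W), where for each unoriented word t̄ = {t, t^{-1}} of length k the quantities occ(t, W) and occf(u, t) are independent of the choice of orientation t of t̄. -/
open List

/-- A letter of the free group `F_n`: a generator index together with a sign. -/
abbrev Letter (n : ℕ) := Fin n × Bool

/-- The inverse of a letter. -/
def linv {n : ℕ} (a : Letter n) : Letter n := (a.1, !a.2)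

@[simp] lemma linv_linv {n : ℕ} (a : Letter n) : linv (linv a) = a := by
  cases a with
  | mk x b => simp [linv]

/-- The (formal) inverse of a word. -/
def wInv {n : ℕ} (w : List (Letter n)) : List (Letter n) := (w.map linv).reverse

@[simp] lemma wInv_wInv {n : ℕ} (w : List (Letter n)) : wInv (wInv w) = w := by
  simp [wInv, Function.comp_def]

/-- A word is reduced if no two consecutive letters are mutually inverse. -/
def Reduced {n : ℕ} (w : List (Letter n)) : Prop :=
  List.Chain' (fun a b => b ≠ linv a) w

/-- A word is cyclically reduced if it is reduced and its first and last letters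
are not mutually inverse. -/
def CyclicallyReduced {n : ℕ} (w : List (Letter n)) : Prop :=
  Reduced w ∧ ∀ a b, w.head? = some a → w.getLast? = some b → a ≠ linv b

/-- `lpow l m` is the `m`-fold concatenation of the list `l` with itself. -/
def lpow {α : Type*} (l : List α) : ℕ → List α
  | 0 => []
  | m + 1 => l ++ lpow l m

/-- The number of oriented occurrences of `u` in the cyclic word represented by `w`. -/
def orientedOcc {n : ℕ} (u w : List (Letter n)) : ℕ :=
  ((Finset.range w.length).filter (fun i => u <+: lpow (w.rotate i) (u.length + 1))).card

/-- `occ u w` : occurrences of the unoriented word `{u, u⁻¹}` in the cyclic word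
represented by `w`. -/
def occ {n : ℕ} (u w : List (Letter n)) : ℕ :=
  orientedOcc u w + orientedOcc (wInv u) w

lemma occ_wInv {n : ℕ} (u w : List (Letter n)) : occ (wInv u) w = occ u w := by
  simp [occ, wInv_wInv, Nat.add_comm]

/-- Occurrences of `u` as a contiguous factor of `w`. -/
def factOcc {n : ℕ} (u w : List (Letter n)) : ℕ :=
  ((Finset.range (w.length + 1)).filter (fun i => u <+: w.drop i)).card

/-- `occf u w` : occurrences of `{u, u⁻¹}` as a contiguous factor of `w`. -/
def occf {n : ℕ} (u w : List (Letter n)) : ℕ := factOcc u w + factOcc (wInv u) w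

/-- Two cyclically reduced words represent the same cyclic word iff one is a
rotation of the other or of its inverse. -/
def SameCyclicWord {n : ℕ} (v w : List (Letter n)) : Prop :=
  (∃ i, w = v.rotate i) ∨ (∃ i, w = (wInv v).rotate i)

/-- Cyclic reduction: repeatedly delete the first and last letter while they are
mutually inverse. -/
def cyclicReduce {n : ℕ} : List (Letter n) → List (Letter n)
  | [] => []
  | a :: rest =>
    if rest.getLast? = some (linv a) then cyclicReduce rest.dropLast
    else a :: rest
  termination_by w => w.length
  decreasing_by simp [List.length_dropLast] <;> omega

/-!
Write `window w k i` for the length-`k` factor of the periodic word `w w w …` starting at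
position `i`. The positions `i < |w|` are exactly the oriented occurrences of length-`k` words in
`W`, and each window lies in `T` in exactly one orientation; since `occf u` is invariant under
inverting its second argument, the left side equals `∑ i < |w|, occf u (window w k i)`. A word of
length `k` contains a word of length `k - 1` only at offsets `0` and `1`, i.e. at the occurrences
in `W` at positions `i` and `i + 1`, so after shifting the index every occurrence of `u` and of
`u⁻¹` in `W` is counted twice.
-/

section Window

variable {α : Type*}

lemma length_lpow (v : List α) (m : ℕ) : (lpow v m).length = m * v.length := by
  induction m with
  | zero => simp [lpow]
  | succ m ih => rw [lpow, List.length_append, ih, Nat.succ_mul, Nat.add_comm]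

lemma getElem?_lpow (v : List α) (m j : ℕ) :
    (lpow v m)[j]? = if j < m * v.length then v[j % v.length]? else none := by
  induction m generalizing j with
  | zero => simp [lpow]
  | succ m ih =>
    rw [lpow, List.getElem?_append, ih]
    by_cases hj : j < v.length
    · rw [if_pos hj, if_pos (by nlinarith), Nat.mod_eq_of_lt hj]
    · rw [if_neg hj, ← Nat.mod_eq_sub_mod (not_lt.mp hj), Nat.succ_mul]
      simp only [Nat.sub_lt_iff_lt_add (not_lt.mp hj), Nat.add_comm]

lemma getElem?_lpow_rotate (w : List α) (m i j : ℕ) :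
    (lpow (w.rotate i) m)[j]? = if j < m * w.length then w[(i + j) % w.length]? else none := by
  rcases eq_or_ne w [] with rfl | hw
  · simp [getElem?_lpow]
  rw [getElem?_lpow, List.length_rotate,
    List.getElem?_rotate (Nat.mod_lt _ (List.length_pos_iff.mpr hw)), Nat.mod_add_mod,
    Nat.add_comm j]

def window (w : List α) (k i : ℕ) : List α := (lpow (w.rotate i) k).take k

lemma getElem?_take_lpow_rotate {j m : ℕ} (w : List α) (i t : ℕ) (h : j ≤ m) :
    ((lpow (w.rotate i) m).take j)[t]? = if t < j then w[(i + t) % w.length]? else none := by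
  rw [List.getElem?_take, getElem?_lpow_rotate]
  rcases eq_or_ne w [] with rfl | hw
  · simp
  have hL := List.length_pos_iff.mpr hw
  split_ifs <;> first | rfl | nlinarith

lemma getElem?_window (w : List α) (k i j : ℕ) :
    (window w k i)[j]? = if j < k then w[(i + j) % w.length]? else none :=
  getElem?_take_lpow_rotate w i j le_rfl

lemma take_lpow_rotate {j m : ℕ} (w : List α) (i : ℕ) (h : j ≤ m) :
    (lpow (w.rotate i) m).take j = window w j i :=
  List.ext_getElem? fun t => by rw [getElem?_take_lpow_rotate w i t h, getElem?_window]

lemma take_window {j k : ℕ} (w : List α) (i : ℕ) (h : j ≤ k) :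
    (window w k i).take j = window w j i := by
  rw [window, List.take_take, min_eq_left h, take_lpow_rotate w i h]

lemma prefix_window_iff {x : List α} {k : ℕ} (w : List α) (i : ℕ) (h : x.length ≤ k) :
    x <+: window w k i ↔ window w x.length i = x := by
  rw [List.prefix_iff_eq_take, take_window w i h, eq_comm]

lemma drop_one_window (w : List α) (k i : ℕ) :
    (window w k i).drop 1 = window w (k - 1) (i + 1) :=
  List.ext_getElem? fun j => by
    rw [List.getElem?_drop, getElem?_window, getElem?_window, Nat.add_assoc]
    exact if_congr (by omega) rfl rfl

lemma length_window {w : List α} (hw : w ≠ []) (k i : ℕ) : (window w k i).length = k := by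
  rw [window, List.length_take, length_lpow, List.length_rotate]
  exact min_eq_left (Nat.le_mul_of_pos_right k (List.length_pos_iff.mpr hw))

lemma window_add_length (w : List α) (k i : ℕ) : window w k (i + w.length) = window w k i := by
  rw [window, ← List.rotate_mod, Nat.add_mod_right, List.rotate_mod, window]

lemma window_eq_take_drop_lpow (w : List α) (k i : ℕ) :
    window w k i = ((lpow w (i + k)).drop i).take k :=
  List.ext_getElem? fun j => by
    rw [getElem?_window, List.getElem?_take, List.getElem?_drop, getElem?_lpow]
    rcases eq_or_ne w [] with rfl | hw
    · simp
    have hL := List.length_pos_iff.mpr hw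
    split_ifs <;> first | rfl | nlinarith

lemma isChain_lpow {R : α → α → Prop} {v : List α} (hv : v.IsChain R)
    (hcycle : ∀ a ∈ v.getLast?, ∀ b ∈ v.head?, R a b) (m : ℕ) : (lpow v m).IsChain R := by
  induction m with
  | zero => exact List.isChain_nil
  | succ m ih =>
    refine List.isChain_append.mpr ⟨hv, ih, fun a ha b hb => hcycle a ha b ?_⟩
    cases m with
    | zero => simp [lpow] at hb
    | succ m =>
      rcases eq_or_ne v [] with rfl | hne
      · simp at ha
      · simpa [lpow, List.head?_append, hne] using hb

end Window

lemma Finset.sum_range_shift_of_eq {M : Type*} [AddCancelCommMonoid M] {g : ℕ → M} {L : ℕ}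
    (hg : g L = g 0) : ∑ i ∈ Finset.range L, g (i + 1) = ∑ i ∈ Finset.range L, g i :=
  add_right_cancel (b := g 0) <| by
    rw [← Finset.sum_range_succ', Finset.sum_range_succ, hg]

section Words

variable {n : ℕ}

@[simp] lemma length_wInv (a : List (Letter n)) : (wInv a).length = a.length := by
  simp [wInv]

lemma wInv_append (a b : List (Letter n)) : wInv (a ++ b) = wInv b ++ wInv a := by
  simp [wInv]

lemma eq_wInv_iff {s t : List (Letter n)} : s = wInv t ↔ wInv s = t :=
  ⟨fun h => h ▸ wInv_wInv t, fun h => h ▸ (wInv_wInv s).symm⟩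

lemma CyclicallyReduced.reduced_window {w : List (Letter n)} (h : CyclicallyReduced w)
    (k i : ℕ) : Reduced (window w k i) := by
  rw [window_eq_take_drop_lpow]
  exact ((isChain_lpow h.1 (fun a ha b hb => h.2 b a hb ha) _).drop i).take k

lemma orientedOcc_eq_sum (x w : List (Letter n)) :
    orientedOcc x w = ∑ i ∈ Finset.range w.length, if window w x.length i = x then 1 else 0 := by
  rw [orientedOcc, Finset.card_filter]
  refine Finset.sum_congr rfl fun i _ => if_congr ?_ rfl rfl
  rw [List.prefix_iff_eq_take, take_lpow_rotate w i (Nat.le_succ _), eq_comm]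

lemma prefix_drop_wInv {u w : List (Letter n)} {i : ℕ} (hi : i ≤ w.length)
    (h : u <+: (wInv w).drop i) :
    i + u.length ≤ w.length ∧ wInv u <+: w.drop (w.length - u.length - i) := by
  obtain ⟨r, hr⟩ := h
  have hlen : u.length + r.length = w.length - i := by
    simpa using congrArg List.length hr
  have hw : w = wInv r ++ (wInv u ++ wInv ((wInv w).take i)) := by
    rw [← wInv_append, ← wInv_append, List.append_assoc, hr, List.take_append_drop, wInv_wInv]
  refine ⟨by omega, ?_⟩
  rw [show w.length - u.length - i = (wInv r).length by rw [length_wInv]; omega, hw,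
    List.drop_left]
  exact List.prefix_append _ _

lemma factOcc_wInv (u w : List (Letter n)) : factOcc u (wInv w) = factOcc (wInv u) w := by
  have back : ∀ {j}, j ≤ w.length → wInv u <+: w.drop j →
      j + u.length ≤ w.length ∧ u <+: (wInv w).drop (w.length - u.length - j) := by
    intro j hj h
    simpa using prefix_drop_wInv (u := wInv u) (w := wInv w) (by simpa using hj) (by simpa using h)
  rw [factOcc, factOcc, length_wInv]
  refine Finset.card_nbij' (fun i => w.length - u.length - i) (fun i => w.length - u.length - i)
    ?_ ?_ ?_ ?_
  · intro i hi
    simp only [Finset.coe_filter, Finset.mem_range, Set.mem_ofPred_eq] at hi ⊢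
    exact ⟨by omega, (prefix_drop_wInv (by omega) hi.2).2⟩
  · intro j hj
    simp only [Finset.coe_filter, Finset.mem_range, Set.mem_ofPred_eq] at hj ⊢
    exact ⟨by omega, (back (by omega) hj.2).2⟩
  · intro i hi
    simp only [Finset.coe_filter, Finset.mem_range, Set.mem_ofPred_eq] at hi
    have := (prefix_drop_wInv (by omega) hi.2).1
    dsimp only
    omega
  · intro j hj
    simp only [Finset.coe_filter, Finset.mem_range, Set.mem_ofPred_eq] at hj
    have := (back (by omega) hj.2).1
    dsimp only
    omega

lemma occf_wInv (u t : List (Letter n)) : occf u (wInv t) = occf u t := by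
  rw [occf, occf, factOcc_wInv, factOcc_wInv, wInv_wInv, Nat.add_comm]

lemma factOcc_eq_of_length_eq_succ {x t : List (Letter n)} (h : t.length = x.length + 1) :
    factOcc x t = (if x <+: t then 1 else 0) + (if x <+: t.drop 1 then 1 else 0) := by
  rw [factOcc, Finset.card_filter, h, Finset.sum_range_succ', Finset.sum_range_succ',
    Finset.sum_eq_zero, List.drop_zero, zero_add, Nat.add_comm]
  intro i hi
  refine if_neg fun hx => ?_
  have := hx.length_le
  rw [List.length_drop] at this
  rw [Finset.mem_range] at hi
  omega

lemma factOcc_window {w : List (Letter n)} (hw : w ≠ []) {x : List (Letter n)} {k : ℕ}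
    (hk : x.length + 1 = k) (i : ℕ) :
    factOcc x (window w k i) =
      (if window w x.length i = x then 1 else 0) +
        (if window w x.length (i + 1) = x then 1 else 0) := by
  rw [factOcc_eq_of_length_eq_succ (by rw [length_window hw, hk]), drop_one_window]
  simp only [prefix_window_iff w _ (show x.length ≤ k by omega),
    prefix_window_iff w _ (show x.length ≤ k - 1 by omega)]

lemma sum_factOcc_window {w : List (Letter n)} (hw : w ≠ []) {x : List (Letter n)} {k : ℕ}
    (hk : x.length + 1 = k) :
    ∑ i ∈ Finset.range w.length, factOcc x (window w k i) = 2 * orientedOcc x w := by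
  have hperiod := window_add_length w x.length 0
  rw [zero_add] at hperiod
  rw [Finset.sum_congr rfl fun i _ => factOcc_window hw hk i, Finset.sum_add_distrib,
    Finset.sum_range_shift_of_eq (g := fun i => if window w x.length i = x then 1 else 0)
      (by simp only [hperiod]), orientedOcc_eq_sum, two_mul]

lemma sum_orientation_indicator_mul {T : Finset (List (Letter n))} {s : List (Letter n)}
    (hs : s ∈ T ↔ wInv s ∉ T) (g : List (Letter n) → ℕ) (hg : g (wInv s) = g s) :
    ∑ t ∈ T, ((if s = t then 1 else 0) + (if s = wInv t then 1 else 0)) * g t = g s := by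
  simp only [add_mul, ite_mul, one_mul, zero_mul, Finset.sum_add_distrib, eq_wInv_iff,
    Finset.sum_ite_eq]
  by_cases h : s ∈ T
  · simp [h, hs.mp h]
  · simp [h, hg, not_not.mp (mt hs.mpr h)]

lemma sum_occ_mul_eq_sum_window {T : Finset (List (Letter n))} {k : ℕ}
    (hlen : ∀ t ∈ T, t.length = k)
    (hT : ∀ t : List (Letter n), Reduced t → t.length = k → (t ∈ T ↔ wInv t ∉ T))
    {w : List (Letter n)} (hw : w ≠ []) (hcr : CyclicallyReduced w)
    (g : List (Letter n) → ℕ) (hg : ∀ t, g (wInv t) = g t) :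
    ∑ t ∈ T, occ t w * g t = ∑ i ∈ Finset.range w.length, g (window w k i) :=
  calc ∑ t ∈ T, occ t w * g t
      = ∑ t ∈ T, ∑ i ∈ Finset.range w.length,
          ((if window w k i = t then 1 else 0) + (if window w k i = wInv t then 1 else 0)) * g t :=
        Finset.sum_congr rfl fun t ht => by
          rw [occ, orientedOcc_eq_sum, orientedOcc_eq_sum, length_wInv, hlen t ht,
            ← Finset.sum_add_distrib, Finset.sum_mul]
    _ = ∑ i ∈ Finset.range w.length, g (window w k i) := by
        rw [Finset.sum_comm]
        exact Finset.sum_congr rfl fun i _ => sum_orientation_indicator_mul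
          (hT _ (hcr.reduced_window k i) (length_window hw k i)) g (hg _)

end Words

theorem sum_occ_occf_general (n k : ℕ) (hk : 2 ≤ k)
    (T : Finset (List (Letter n)))
    (hTmem : ∀ t ∈ T, Reduced t ∧ t.length = k)
    (hTone : ∀ t : List (Letter n), Reduced t → t.length = k → (t ∈ T ↔ wInv t ∉ T))
    (w : List (Letter n)) (hw : w ≠ []) (hcr : CyclicallyReduced w)
    (u : List (Letter n)) (hul : u.length = k - 1) :
    ∑ t ∈ T, occ t w * occf u t = 2 * occ u w := by
  have hu : u.length + 1 = k := by omega
  have hu' : (wInv u).length + 1 = k := by rw [length_wInv, hu]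
  rw [sum_occ_mul_eq_sum_window (fun t ht => (hTmem t ht).2) hTone hw hcr _ (occf_wInv u)]
  simp only [occf, Finset.sum_add_distrib, sum_factOcc_window hw hu, sum_factOcc_window hw hu',
    occ, Nat.mul_add]

/-- Let `T` contain exactly one orientation of each unoriented
reduced word of length `k`. Then for any cyclic word `W` (represented by `w`) and any
reduced word `u` of length `k - 1`,
`Σ_{t ∈ T} occ(t, W) · occf(u, t) = 2 · occ(u, W)`; by the choice of `T` the summands
are independent of the chosen orientations. -/
theorem sum_occ_occf (n k : ℕ) (hk : 2 ≤ k)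
    (T : Finset (List (Letter n)))
    (hTmem : ∀ t ∈ T, Reduced t ∧ t.length = k)
    (hTone : ∀ t : List (Letter n), Reduced t → t.length = k → (t ∈ T ↔ wInv t ∉ T))
    (w : List (Letter n)) (hw : w ≠ []) (hcr : CyclicallyReduced w)
    (u : List (Letter n)) (hur : Reduced u) (hul : u.length = k - 1) :
    ∑ t ∈ T, occ t w * occf u t = 2 * occ u w :=
  sum_occ_occf_general n k hk T hTmem hTone w hw hcr u hul
end

section
/- Let n ≥ 2, k ≥ 2, and fix any orientation section σ. Then the kernel of p←_k − p→_k : M_k → M_{k−1} is generated as a ℤ-module by its elements all of whose coordinates are nonnegative. -/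
open List

/-- Oriented reduced words of length `k`. -/
structure RW (n k : ℕ) where
  val : List (Letter n)
  red : Reduced val
  len : val.length = k

instance (n k : ℕ) : DecidableEq (RW n k) := fun a b =>
  decidable_of_iff (a.val = b.val)
    ⟨fun h => by cases a; cases b; cases h; rfl, fun h => congrArg RW.val h⟩

/-- Identify a reduced word with its inverse: the quotient is the set `W_k` of
unoriented words of length `k`. -/
instance uwSetoid (n k : ℕ) : Setoid (RW n k) where
  r u v := v.val = u.val ∨ v.val = wInv u.val
  iseqv := by
    refine ⟨fun u => Or.inl rfl, ?_, ?_⟩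
    · rintro u v (h | h)
      · exact Or.inl h.symm
      · exact Or.inr (by rw [h, wInv_wInv])
    · rintro u v w (h1 | h1) (h2 | h2)
      · exact Or.inl (h2.trans h1)
      · exact Or.inr (h2.trans (congrArg wInv h1))
      · exact Or.inr (h2.trans h1)
      · exact Or.inl (by rw [h2, h1, wInv_wInv])

instance (n k : ℕ) : ∀ a b : RW n k, Decidable (a ≈ b) := fun a b =>
  show Decidable (b.val = a.val ∨ b.val = wInv a.val) from inferInstance

/-- `W_k` : unoriented reduced words of length `k`. -/
abbrev UW (n k : ℕ) := Quotient (uwSetoid n k)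

def toVec (n k : ℕ) (u : RW n k) : List.Vector (Letter n) k := ⟨u.val, u.len⟩

lemma toVec_inj (n k : ℕ) : Function.Injective (toVec n k) := by
  intro a b h
  have h' : a.val = b.val := congrArg Subtype.val h
  cases a; cases b; cases h'; rfl

noncomputable instance (n k : ℕ) : Fintype (RW n k) :=
  Fintype.ofInjective _ (toVec_inj n k)

noncomputable example (n k : ℕ) : Fintype (UW n k) := inferInstance
noncomputable example (n k : ℕ) : DecidableEq (UW n k) := inferInstance

/-- `M_k` : the free ℤ-module on `W_k`, realized as functions `W_k → ℤ`. -/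
abbrev Mk (n k : ℕ) := UW n k → ℤ

/-- `π_k` of the cyclic word represented by `w` : the vector of occurrence counts
of unoriented words of length `k`. -/
def pik (n k : ℕ) (w : List (Letter n)) : Mk n k :=
  Quotient.lift (fun u : RW n k => (occ u.val w : ℤ)) (by
    intro a b hab
    have h : occ a.val w = occ b.val w := by
      rcases hab with h | h
      · rw [h]
      · rw [h, occ_wInv]
    show ((occ a.val w : ℕ) : ℤ) = ((occ b.val w : ℕ) : ℤ)
    rw [h])

lemma Reduced.drop' {n : ℕ} {w : List (Letter n)} (h : Reduced w) (m : ℕ) :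
    Reduced (w.drop m) :=
  List.IsChain.suffix h (List.drop_suffix m w)

lemma Reduced.dropLast' {n : ℕ} {w : List (Letter n)} (h : Reduced w) :
    Reduced w.dropLast :=
  List.IsChain.prefix h (List.dropLast_prefix w)

/-- The unoriented `(k-1)`-suffix of an oriented word of length `k`. -/
def sufC {n k : ℕ} (w : RW n k) : UW n (k - 1) :=
  Quotient.mk (uwSetoid n (k - 1)) ⟨w.val.drop 1, w.red.drop' 1, by simp [w.len]⟩

/-- The unoriented `(k-1)`-prefix of an oriented word of length `k`. -/
def preC {n k : ℕ} (w : RW n k) : UW n (k - 1) :=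
  Quotient.mk (uwSetoid n (k - 1)) ⟨w.val.dropLast, w.red.dropLast', by simp [w.len]⟩

/-- Matrix of `p←_k` w.r.t. the orientation section `σ`: a basis element `w̄` of `M_k`
is sent to the sum of the unoriented `(k-1)`-words at its outward-pointing ends. -/
noncomputable def AOut (n k : ℕ) (σ : List (Letter n) → List (Letter n)) :
    Matrix (UW n (k - 1)) (UW n k) ℤ := fun ub wb =>
  ∑ w : RW n k,
    if Quotient.mk (uwSetoid n k) w = wb ∧ σ w.val = w.val then
      ((if sufC w = ub ∧ σ (w.val.drop 1) = w.val.drop 1 then 1 else 0) +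
       (if preC w = ub ∧ σ (w.val.dropLast) = wInv (w.val.dropLast) then 1 else 0))
    else 0

/-- Matrix of `p→_k` : inward-pointing ends. -/
noncomputable def AIn (n k : ℕ) (σ : List (Letter n) → List (Letter n)) :
    Matrix (UW n (k - 1)) (UW n k) ℤ := fun ub wb =>
  ∑ w : RW n k,
    if Quotient.mk (uwSetoid n k) w = wb ∧ σ w.val = w.val then
      ((if sufC w = ub ∧ σ (w.val.drop 1) = wInv (w.val.drop 1) then 1 else 0) +
       (if preC w = ub ∧ σ (w.val.dropLast) = w.val.dropLast then 1 else 0))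
    else 0

/-- `p←_k : M_k → M_{k-1}`. -/
noncomputable def pOut (n k : ℕ) (σ : List (Letter n) → List (Letter n)) :
    Mk n k →ₗ[ℤ] Mk n (k - 1) := (AOut n k σ).mulVecLin

/-- `p→_k : M_k → M_{k-1}`. -/
noncomputable def pIn (n k : ℕ) (σ : List (Letter n) → List (Letter n)) :
    Mk n k →ₗ[ℤ] Mk n (k - 1) := (AIn n k σ).mulVecLin


/-!
The constant vector `1` lies in the kernel. If `t` is the orientation of a `(k-1)`-word chosen
by `σ`, the outward ends at `⟦t⟧` correspond to the reduced `k`-words with suffix `t`, and the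
inward ends to those with suffix `t⁻¹`; there are `2n - 1` of each. Every kernel element `f` is
then the difference of the nonnegative kernel elements `f + N • 1` and `N • 1`, `N = ∑ |f|`.
-/

theorem Submodule.span_nonneg_eq_of_one_mem {R ι : Type*} [Ring R] [LinearOrder R]
    [IsOrderedRing R] [Fintype ι] (K : Submodule R (ι → R)) (h1 : (1 : ι → R) ∈ K) :
    Submodule.span R {f : ι → R | (∀ i, 0 ≤ f i) ∧ f ∈ K} = K := by
  refine le_antisymm (Submodule.span_le.mpr fun f hf => hf.2) fun f hf => ?_
  set N : R := ∑ i, |f i|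
  have hN : ∀ i, |f i| ≤ N := fun i =>
    Finset.single_le_sum (fun j _ => abs_nonneg (f j)) (Finset.mem_univ i)
  have hshift : f + N • 1 ∈ Submodule.span R {f : ι → R | (∀ i, 0 ≤ f i) ∧ f ∈ K} :=
    Submodule.subset_span ⟨fun i => by simpa [neg_le_iff_add_nonneg] using (abs_le.mp (hN i)).1,
      K.add_mem hf (K.smul_mem N h1)⟩
  have hconst : N • (1 : ι → R) ∈ Submodule.span R {f : ι → R | (∀ i, 0 ≤ f i) ∧ f ∈ K} :=
    Submodule.subset_span ⟨fun i => by simpa using (abs_nonneg (f i)).trans (hN i),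
      K.smul_mem N h1⟩
  simpa using Submodule.sub_mem _ hshift hconst

open scoped Finset

theorem Finset.sum_sum_ite_eq_and {α β M : Type*} [Fintype α] [Fintype β] [DecidableEq β]
    [AddCommMonoid M] (q : α → β) (P : α → Prop) [DecidablePred P] (C : α → M) :
    ∑ b, ∑ a, (if q a = b ∧ P a then C a else 0) = ∑ a, if P a then C a else 0 := by
  rw [Finset.sum_comm]
  simp only [ite_and, Finset.sum_ite_eq, Finset.mem_univ, if_true]

section Words

variable {n : ℕ}

lemma linv_ne_self (a : Letter n) : linv a ≠ a := by
  cases a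
  simp [linv]

lemma ne_linv_comm {a b : Letter n} : a ≠ linv b ↔ b ≠ linv a := by
  constructor <;> rintro h rfl <;> simp at h

@[simp] lemma wInv_length (w : List (Letter n)) : (wInv w).length = w.length := by
  simp [wInv]

lemma wInv_eq_iff {u v : List (Letter n)} : wInv u = v ↔ u = wInv v :=
  ⟨fun h => by rw [← h, wInv_wInv], fun h => by rw [h, wInv_wInv]⟩

lemma wInv_inj {u v : List (Letter n)} : wInv u = wInv v ↔ u = v := by
  rw [wInv_eq_iff, wInv_wInv]

lemma drop_one_wInv (w : List (Letter n)) : (wInv w).drop 1 = wInv w.dropLast := by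
  simp only [wInv, List.drop_one, List.tail_reverse, List.map_dropLast]

lemma wInv_getElem {w : List (Letter n)} {i : ℕ} (hi : i < w.length) :
    (wInv w)[i]'(by simpa using hi) = linv (w[w.length - 1 - i]'(by omega)) := by
  simp only [wInv, List.getElem_reverse, List.getElem_map, List.length_map]

lemma reduced_wInv {w : List (Letter n)} (h : Reduced w) : Reduced (wInv w) := by
  show List.IsChain _ (List.map linv w).reverse
  rw [List.isChain_reverse, List.isChain_map]
  exact h.imp fun a b hab hc => hab (by rw [hc, linv_linv])

lemma reduced_cons_cons {a b : Letter n} {t : List (Letter n)} :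
    Reduced (a :: b :: t) ↔ b ≠ linv a ∧ Reduced (b :: t) :=
  List.isChain_cons_cons

/-- If `wInv w = w`, the middle of `w` is a self-inverse letter (odd length) or a cancelling
pair (even length). -/
lemma wInv_ne_self {w : List (Letter n)} (hw : Reduced w) (hne : w ≠ []) :
    wInv w ≠ w := by
  intro h
  have hl : 0 < w.length := List.length_pos_iff.mpr hne
  have mirror : ∀ i (hi : i < w.length) j (hj : j < w.length), i + j + 1 = w.length →
      w[i] = linv w[j] := by
    intro i hi j hj hij
    have e : (wInv w)[i]'(by simpa using hi) = w[i] := by simp only [h]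
    rw [← e, wInv_getElem hi]
    simp [show w.length - 1 - i = j by omega]
  rcases Nat.even_or_odd w.length with ⟨q, hq⟩ | ⟨q, hq⟩
  · have hchain := List.isChain_iff_getElem.mp hw (q - 1) (by omega)
    simp only [show q - 1 + 1 = q by omega] at hchain
    exact hchain (mirror q (by omega) (q - 1) (by omega) (by omega))
  · exact linv_ne_self _ (mirror q (by omega) q (by omega) (by omega)).symm

end Words

namespace RW

variable {n k : ℕ}

lemma ext {u v : RW n k} (h : u.val = v.val) : u = v := by
  cases u; cases v; cases h; rfl

lemma val_ne_nil (hk : k ≠ 0) (w : RW n k) : w.val ≠ [] := by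
  intro h
  have := w.len
  simp [h] at this
  omega

def inv (w : RW n k) : RW n k := ⟨wInv w.val, reduced_wInv w.red, by simp [w.len]⟩

@[simp] lemma inv_val (w : RW n k) : w.inv.val = wInv w.val := rfl

lemma inv_involutive : Function.Involutive (inv : RW n k → RW n k) :=
  fun w => ext (by simp)

lemma card_filter_drop_one_eq {t : List (Letter n)} (ht : Reduced t) (hne : t ≠ [])
    (hk : t.length + 1 = k) :
    #{w : RW n k | w.val.drop 1 = t} = Fintype.card (Letter n) - 1 := by
  obtain ⟨b, t, rfl⟩ := List.exists_cons_of_ne_nil hne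
  have decomp : ∀ w : RW n k, w.val.drop 1 = b :: t → w.val = w.val.headD b :: b :: t := by
    intro w hw
    cases hv : w.val with
    | nil => simp [hv] at hw
    | cons c rest => simpa [hv] using hw
  rw [← Finset.card_univ, ← Finset.card_erase_of_mem (Finset.mem_univ (linv b))]
  refine Finset.card_bij' (fun w _ => w.val.headD b)
    (fun a ha => ⟨a :: b :: t, reduced_cons_cons.mpr
      ⟨ne_linv_comm.mp (by simpa using Finset.ne_of_mem_erase ha), ht⟩, by simp [← hk]⟩)
    ?_ (fun _ _ => by simp) (fun w hw => ext (decomp w (by simpa using hw)).symm)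
    (fun _ _ => rfl)
  intro w hw
  have hred := w.red
  rw [decomp w (by simpa using hw), reduced_cons_cons] at hred
  simpa using ne_linv_comm.mpr hred.1

lemma mk_inv (w : RW n k) :
    Quotient.mk (uwSetoid n k) w.inv = Quotient.mk (uwSetoid n k) w :=
  Quotient.sound (Or.inr (wInv_wInv _).symm)

end RW

section OrientationSection

variable {n k : ℕ} {σ : List (Letter n) → List (Letter n)}

lemma exists_rep_fixed (hσ1 : ∀ u, σ u = u ∨ σ u = wInv u) (hσ2 : ∀ u, σ (wInv u) = σ u)
    (ub : UW n k) : ∃ t : RW n k, σ t.val = t.val ∧ Quotient.mk (uwSetoid n k) t = ub := by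
  obtain ⟨r, rfl⟩ := Quotient.exists_rep ub
  rcases hσ1 r.val with h | h
  · exact ⟨r, h, rfl⟩
  · exact ⟨r.inv, by simp [hσ2, h], r.mk_inv⟩

lemma fixed_iff_not_fixed_wInv (hσ1 : ∀ u, σ u = u ∨ σ u = wInv u)
    (hσ2 : ∀ u, σ (wInv u) = σ u) {u : List (Letter n)} (hu : Reduced u) (hne : u ≠ []) :
    σ u = u ↔ ¬σ (wInv u) = wInv u := by
  rw [hσ2]
  rcases hσ1 u with h | h <;> simp [h, Ne.symm (wInv_ne_self hu hne), wInv_ne_self hu hne]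

lemma mk_eq_and_fixed_iff (hσ2 : ∀ u, σ (wInv u) = σ u) (hk : k ≠ 0) {t u : RW n k}
    (ht : σ t.val = t.val) :
    (Quotient.mk (uwSetoid n k) u = Quotient.mk (uwSetoid n k) t ∧ σ u.val = u.val) ↔
      u.val = t.val := by
  constructor
  · rintro ⟨hq, hu⟩
    rcases Quotient.exact hq with h | h
    · exact h.symm
    · have hσu : σ u.val = wInv u.val := by rw [wInv_eq_iff.mp h.symm, hσ2, ht, wInv_wInv]
      exact absurd (hu.symm.trans hσu) (wInv_ne_self u.red (u.val_ne_nil hk)).symm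
  · intro h
    exact ⟨Quotient.sound (Or.inl h.symm), by rw [h, ht]⟩

lemma mk_eq_and_flipped_iff (hσ2 : ∀ u, σ (wInv u) = σ u) (hk : k ≠ 0) {t u : RW n k}
    (ht : σ t.val = t.val) :
    (Quotient.mk (uwSetoid n k) u = Quotient.mk (uwSetoid n k) t ∧ σ u.val = wInv u.val) ↔
      u.val = wInv t.val := by
  have hflip : σ u.val = wInv u.val ↔ σ u.inv.val = u.inv.val := by simp [hσ2]
  rw [hflip, ← u.mk_inv, mk_eq_and_fixed_iff hσ2 hk ht, RW.inv_val, wInv_eq_iff]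

lemma sum_fixed_add_inv (hσ1 : ∀ u, σ u = u ∨ σ u = wInv u) (hσ2 : ∀ u, σ (wInv u) = σ u)
    (hk : k ≠ 0) {M : Type*} [AddCommMonoid M] (X : RW n k → M) :
    ∑ w : RW n k, (if σ w.val = w.val then X w + X w.inv else 0) = ∑ w, X w := by
  have hreindex : ∑ w : RW n k, (if σ w.val = w.val then X w.inv else 0) =
      ∑ w : RW n k, (if σ w.inv.val = w.inv.val then X w else 0) := by
    rw [← Equiv.sum_comp (RW.inv_involutive.toPerm _)]
    simp only [Function.Involutive.coe_toPerm, RW.inv_involutive _]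
  simp only [ite_add_zero]
  rw [Finset.sum_add_distrib, hreindex, ← Finset.sum_add_distrib]
  refine Finset.sum_congr rfl fun w _ => ?_
  by_cases h : σ w.val = w.val
  · have := (fixed_iff_not_fixed_wInv hσ1 hσ2 w.red (w.val_ne_nil hk)).mp h
    simp [h, this]
  · have := (fixed_iff_not_fixed_wInv hσ1 hσ2 w.red (w.val_ne_nil hk)).not_left.mp h
    simp [h, this]

/-- With `t` the chosen orientation of the end, the chosen `w` points outward at `⟦t⟧` through
its suffix iff `w` has suffix `t`, and through its prefix iff `w⁻¹` has suffix `t`. -/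
lemma sum_AOut_eq_card (hσ1 : ∀ u, σ u = u ∨ σ u = wInv u) (hσ2 : ∀ u, σ (wInv u) = σ u)
    (hk : 2 ≤ k) {t : RW n (k - 1)} (ht : σ t.val = t.val) :
    ∑ wb, AOut n k σ (Quotient.mk _ t) wb = #{w : RW n k | w.val.drop 1 = t.val} := by
  have hsuf : ∀ w : RW n k, (sufC w = Quotient.mk _ t ∧ σ (w.val.drop 1) = w.val.drop 1) ↔
      w.val.drop 1 = t.val := fun w =>
    mk_eq_and_fixed_iff hσ2 (by omega) ht (u := ⟨_, w.red.drop' 1, by simp [w.len]⟩)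
  have hpre : ∀ w : RW n k, (preC w = Quotient.mk _ t ∧
      σ w.val.dropLast = wInv w.val.dropLast) ↔ w.inv.val.drop 1 = t.val := fun w =>
    (mk_eq_and_flipped_iff hσ2 (by omega) ht (u := ⟨_, w.red.dropLast', by simp [w.len]⟩)).trans
      (by rw [RW.inv_val, drop_one_wInv, wInv_eq_iff])
  simp only [AOut, Finset.sum_sum_ite_eq_and, hsuf, hpre]
  rw [sum_fixed_add_inv hσ1 hσ2 (by omega) (fun w => if w.val.drop 1 = t.val then (1 : ℤ) else 0),
    Finset.sum_boole]

lemma sum_AIn_eq_card (hσ1 : ∀ u, σ u = u ∨ σ u = wInv u) (hσ2 : ∀ u, σ (wInv u) = σ u)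
    (hk : 2 ≤ k) {t : RW n (k - 1)} (ht : σ t.val = t.val) :
    ∑ wb, AIn n k σ (Quotient.mk _ t) wb = #{w : RW n k | w.val.drop 1 = wInv t.val} := by
  have hsuf : ∀ w : RW n k, (sufC w = Quotient.mk _ t ∧
      σ (w.val.drop 1) = wInv (w.val.drop 1)) ↔ w.val.drop 1 = wInv t.val := fun w =>
    mk_eq_and_flipped_iff hσ2 (by omega) ht (u := ⟨_, w.red.drop' 1, by simp [w.len]⟩)
  have hpre : ∀ w : RW n k, (preC w = Quotient.mk _ t ∧ σ w.val.dropLast = w.val.dropLast) ↔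
      w.inv.val.drop 1 = wInv t.val := fun w =>
    (mk_eq_and_fixed_iff hσ2 (by omega) ht (u := ⟨_, w.red.dropLast', by simp [w.len]⟩)).trans
      (by rw [RW.inv_val, drop_one_wInv, wInv_inj])
  simp only [AIn, Finset.sum_sum_ite_eq_and, hsuf, hpre]
  rw [sum_fixed_add_inv hσ1 hσ2 (by omega)
    (fun w => if w.val.drop 1 = wInv t.val then (1 : ℤ) else 0), Finset.sum_boole]

lemma one_mem_ker_pOut_sub_pIn (hσ1 : ∀ u, σ u = u ∨ σ u = wInv u)
    (hσ2 : ∀ u, σ (wInv u) = σ u) (hk : 2 ≤ k) :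
    (1 : Mk n k) ∈ LinearMap.ker (pOut n k σ - pIn n k σ) := by
  rw [LinearMap.mem_ker]
  funext ub
  obtain ⟨t, ht, rfl⟩ := exists_rep_fixed hσ1 hσ2 ub
  have hne : t.val ≠ [] := t.val_ne_nil (by omega)
  have hlen : t.val.length + 1 = k := by rw [t.len]; omega
  simp only [LinearMap.sub_apply, pOut, pIn, Matrix.mulVecLin_apply, Pi.sub_apply, Pi.zero_apply,
    Matrix.mulVec, dotProduct, Pi.one_apply, mul_one, sum_AOut_eq_card hσ1 hσ2 hk ht,
    sum_AIn_eq_card hσ1 hσ2 hk ht, RW.card_filter_drop_one_eq t.red hne hlen,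
    RW.card_filter_drop_one_eq (reduced_wInv t.red) (by simpa [wInv] using hne)
      (by simpa using hlen), sub_self]

end OrientationSection

theorem ker_generated_by_nonneg_general (n k : ℕ) (hk : 2 ≤ k)
    (σ : List (Letter n) → List (Letter n))
    (hσ1 : ∀ u : List (Letter n), σ u = u ∨ σ u = wInv u)
    (hσ2 : ∀ u : List (Letter n), σ (wInv u) = σ u) :
    Submodule.span ℤ
        {f : Mk n k | (∀ ub : UW n k, 0 ≤ f ub) ∧
          f ∈ LinearMap.ker (pOut n k σ - pIn n k σ)}
      = LinearMap.ker (pOut n k σ - pIn n k σ) :=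
  Submodule.span_nonneg_eq_of_one_mem _ (one_mem_ker_pOut_sub_pIn hσ1 hσ2 hk)

/-- The kernel of `p←_k - p→_k` is generated as a ℤ-module by its
nonnegative elements. -/
theorem ker_generated_by_nonneg (n k : ℕ) (hn : 2 ≤ n) (hk : 2 ≤ k)
    (σ : List (Letter n) → List (Letter n))
    (hσ1 : ∀ u : List (Letter n), σ u = u ∨ σ u = wInv u)
    (hσ2 : ∀ u : List (Letter n), σ (wInv u) = σ u) :
    Submodule.span ℤ
        {f : Mk n k | (∀ ub : UW n k, 0 ≤ f ub) ∧
          f ∈ LinearMap.ker (pOut n k σ - pIn n k σ)}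
      = LinearMap.ker (pOut n k σ - pIn n k σ) :=
  ker_generated_by_nonneg_general n k hk σ hσ1 hσ2
end
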